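/- arXiv:2511.10452 — 4 statements merged into one kernel-verified Lean document; each statement's English description precedes it below -/
import Mathlib

section
/- Let 𝒞 be a function from real symmetric 2×2 matrices to real symmetric 2×2 matrices that is isotropic, i.e., 𝒞(O·A·Oᵀ) = O·𝒞(A)·Oᵀ for every real orthogonal 2×2 matrix O and every symmetric A. Then for every real symmetric 2×2 matrix A, the matrices 𝒞(A) and A commute: A·𝒞(A) = 𝒞(A)·A. -/
open Matrix

noncomputable section

/-! Diagonalize `A` as `O * A * Oᵀ = D` with `O` orthogonal. Every coordinate reflection fixes the
diagonal matrix `D`, so by isotropy it also fixes `C D`; conjugation by the reflection in the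
`j`-th coordinate negates the off-diagonal entries of row `j`, hence `C D` is diagonal and commutes
with `D`. Conjugating back by `O` gives the claim. -/

theorem Commute.of_conj {M : Type*} [Monoid M] {u v x y : M} (hvu : v * u = 1)
    (h : Commute (u * x * v) (u * y * v)) : Commute x y := by
  have conj_mul : ∀ a b : M, u * a * v * (u * b * v) = u * (a * b) * v := fun a b => by
    simp only [mul_assoc, ← mul_assoc v u, hvu, one_mul]
  have unconj : ∀ a : M, v * (u * a * v) * u = a := fun a => by
    simp only [mul_assoc, hvu, mul_one]; rw [← mul_assoc, hvu, one_mul]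
  simpa only [commute_iff_eq, conj_mul, unconj] using congrArg (fun z => v * z * u) h.eq

namespace Matrix

variable {n R : Type*} [Fintype n] [DecidableEq n]

theorem IsDiag.commute [CommSemiring R] {A B : Matrix n n R} (hA : A.IsDiag) (hB : B.IsDiag) :
    Commute A B := by
  rw [← hA.diagonal_diag, ← hB.diagonal_diag]
  exact commute_diagonal _ _

def IsIsotropic [CommRing R] (C : Matrix n n R → Matrix n n R) : Prop :=
  ∀ O : Matrix n n R, O * Oᵀ = 1 → Oᵀ * O = 1 →
    ∀ A : Matrix n n R, A.IsSymm → C (O * A * Oᵀ) = O * C A * Oᵀ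

theorem IsIsotropic.isDiag_apply [CommRing R] [NoZeroDivisors R] [CharZero R]
    {C : Matrix n n R → Matrix n n R} (hC : IsIsotropic C) {D : Matrix n n R} (hD : D.IsDiag) :
    (C D).IsDiag := by
  intro j k hjk
  set J : Matrix n n R := diagonal (Pi.mulSingle j (-1)) with hJ
  have hJT : Jᵀ = J := diagonal_transpose _
  have hJJ : J * J = 1 := by
    rw [hJ, diagonal_mul_diagonal, ← diagonal_one]
    congr 1
    ext i
    rcases eq_or_ne i j with rfl | hij <;> simp [*]
  have hJD : J * D * Jᵀ = D := by
    rw [hJT, ((isDiag_diagonal _).commute hD).eq, mul_assoc, hJJ, mul_one]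
  have hJO : J * Jᵀ = 1 := by rw [hJT, hJJ]
  have hJTO : Jᵀ * J = 1 := by rw [hJT, hJJ]
  have hCD := congr_fun₂ (hC J hJO hJTO D hD.isSymm) j k
  rw [hJD, hJT, hJ, mul_diagonal, diagonal_mul, Pi.mulSingle_eq_same,
    Pi.mulSingle_eq_of_ne hjk.symm, neg_one_mul, mul_one] at hCD
  exact CharZero.eq_neg_self_iff.mp hCD

theorem IsSymm.exists_orthogonal_conj_isDiag {A : Matrix n n ℝ} (hA : A.IsSymm) :
    ∃ O : Matrix n n ℝ, O * Oᵀ = 1 ∧ Oᵀ * O = 1 ∧ (O * A * Oᵀ).IsDiag := by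
  have hH : A.IsHermitian := by
    rwa [IsHermitian, conjTranspose_eq_transpose_of_trivial]
  set U : Matrix n n ℝ := ↑hH.eigenvectorUnitary
  have hUT : star U = Uᵀ := conjTranspose_eq_transpose_of_trivial U
  refine ⟨Uᵀ, ?_, ?_, ?_⟩
  · rw [transpose_transpose, ← hUT]; exact Unitary.coe_star_mul_self _
  · rw [transpose_transpose, ← hUT]; exact Unitary.coe_mul_star_self _
  · have hdiag := hH.conjStarAlgAut_star_eigenvectorUnitary
    rw [Unitary.conjStarAlgAut_star_apply, hUT] at hdiag
    rw [transpose_transpose, hdiag]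
    exact isDiag_diagonal _

end Matrix

theorem isotropic_commutes_general (C : Matrix (Fin 2) (Fin 2) ℝ → Matrix (Fin 2) (Fin 2) ℝ)
    (hiso : ∀ O : Matrix (Fin 2) (Fin 2) ℝ, O * Oᵀ = 1 → Oᵀ * O = 1 →
      ∀ A : Matrix (Fin 2) (Fin 2) ℝ, A.IsSymm → C (O * A * Oᵀ) = O * C A * Oᵀ) :
    ∀ A : Matrix (Fin 2) (Fin 2) ℝ, A.IsSymm → A * C A = C A * A := by
  intro A hA
  obtain ⟨O, hOOT, hOTO, hD⟩ := hA.exists_orthogonal_conj_isDiag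
  have hCD : (O * C A * Oᵀ).IsDiag := hiso O hOOT hOTO A hA ▸ IsIsotropic.isDiag_apply hiso hD
  exact (Commute.of_conj hOTO (hD.commute hCD)).eq

/-- For an isotropic function `𝒞` from real symmetric 2×2 matrices to real symmetric
2×2 matrices, `𝒞(A)` commutes with `A` for every symmetric `A`. -/
theorem isotropic_commutes (C : Matrix (Fin 2) (Fin 2) ℝ → Matrix (Fin 2) (Fin 2) ℝ)
    (hsym : ∀ A : Matrix (Fin 2) (Fin 2) ℝ, A.IsSymm → (C A).IsSymm)
    (hiso : ∀ O : Matrix (Fin 2) (Fin 2) ℝ, O * Oᵀ = 1 → Oᵀ * O = 1 →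
      ∀ A : Matrix (Fin 2) (Fin 2) ℝ, A.IsSymm → C (O * A * Oᵀ) = O * C A * Oᵀ) :
    ∀ A : Matrix (Fin 2) (Fin 2) ℝ, A.IsSymm → A * C A = C A * A :=
  isotropic_commutes_general C hiso
end
end

section
/- A function 𝒞 from real symmetric 2×2 matrices to real symmetric 2×2 matrices is isotropic if and only if there exist two scalar functions ψ₁ : ℝ × [0,∞) → ℝ and ψ₂ : ℝ × [0,∞) → ℝ such that for every real symmetric 2×2 matrix A, 𝒞(A) = ψ₁(tr A, |dev A|)·I + ψ₂(tr A, |dev A|)·dev A. -/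
open Matrix

noncomputable section

/-- The deviatoric (trace-free) part of a 2×2 real matrix: `dev A = A - (1/2)(tr A)·I`. -/
def dev (A : Matrix (Fin 2) (Fin 2) ℝ) : Matrix (Fin 2) (Fin 2) ℝ :=
  A - ((1 / 2) * A.trace) • (1 : Matrix (Fin 2) (Fin 2) ℝ)

/-- The invariant `|A| = √((1/2)·tr(A²))`. -/
def tnorm (A : Matrix (Fin 2) (Fin 2) ℝ) : ℝ :=
  Real.sqrt ((1 / 2) * (A * A).trace)

lemma tr2 (a b c d : ℝ) : (!![a,b;c,d])ᵀ = !![a,c;b,d] := by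
  ext i j; fin_cases i <;> fin_cases j <;> simp

lemma trace_conj {O A : Matrix (Fin 2) (Fin 2) ℝ} (h2 : Oᵀ * O = 1) :
    (O * A * Oᵀ).trace = A.trace := by
  rw [Matrix.trace_mul_cycle, h2, Matrix.one_mul]

lemma dev_conj {O A : Matrix (Fin 2) (Fin 2) ℝ} (h1 : O * Oᵀ = 1) (h2 : Oᵀ * O = 1) :
    dev (O * A * Oᵀ) = O * dev A * Oᵀ := by
  unfold dev
  rw [trace_conj h2, Matrix.mul_sub, Matrix.sub_mul]
  congr 1
  rw [Matrix.mul_smul, Matrix.smul_mul, Matrix.mul_one, h1]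

lemma tnorm_conj {O A : Matrix (Fin 2) (Fin 2) ℝ} (h2 : Oᵀ * O = 1) :
    tnorm (O * A * Oᵀ) = tnorm A := by
  unfold tnorm
  have e1 : O * A * Oᵀ * (O * A * Oᵀ) = O * A * (Oᵀ * O) * A * Oᵀ := by
    noncomm_ring
  have e2 : O * A * 1 * A * Oᵀ = O * (A * A) * Oᵀ := by
    noncomm_ring
  rw [e1, h2, e2, trace_conj h2]

lemma tnorm_dev_fin (a b d : ℝ) :
    tnorm (dev !![a,b;b,d]) = Real.sqrt (((a-d)/2)^2 + b^2) := by
  have hd : dev !![a,b;b,d] = !![(a-d)/2, b; b, (d-a)/2] := by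
    unfold dev
    ext i j
    fin_cases i <;> fin_cases j <;>
      simp [Matrix.trace_fin_two, Matrix.one_apply] <;> ring
  rw [hd]
  unfold tnorm
  congr 1
  simp [Matrix.mul_apply, Matrix.vecMul, dotProduct, Fin.sum_univ_two,
    Matrix.trace_fin_two]
  ring

lemma rot_orth1 (c σ : ℝ) (h1 : c^2+σ^2 = 1) : !![c,-σ;σ,c] * !![c,-σ;σ,c]ᵀ = 1 := by
  rw [tr2]; ext i j; fin_cases i <;> fin_cases j <;>
    simp [Matrix.mul_apply, Matrix.vecMul, dotProduct, Fin.sum_univ_two,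
      Matrix.one_apply] <;>
    nlinarith [h1]

lemma rot_orth2 (c σ : ℝ) (h1 : c^2+σ^2 = 1) : !![c,-σ;σ,c]ᵀ * !![c,-σ;σ,c] = 1 := by
  rw [tr2]; ext i j; fin_cases i <;> fin_cases j <;>
    simp [Matrix.mul_apply, Matrix.vecMul, dotProduct, Fin.sum_univ_two,
      Matrix.one_apply] <;>
    nlinarith [h1]

lemma rot_spec (a b d s c σ : ℝ) (h1 : c^2+σ^2 = 1) (h2 : s*(c^2-σ^2) = (a-d)/2)
    (h3 : 2*s*c*σ = b) :
    !![a,b;b,d] = !![c,-σ;σ,c] * !![(a+d)/2+s,0;0,(a+d)/2-s] * !![c,-σ;σ,c]ᵀ := by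
  rw [tr2]; ext i j; fin_cases i <;> fin_cases j <;>
    simp [Matrix.mul_apply, Matrix.vecMul, dotProduct, Fin.sum_univ_two]
  · linear_combination (-(a+d)/2)*h1 - h2
  · linear_combination -h3
  · linear_combination -h3
  · linear_combination (-(a+d)/2)*h1 + h2

lemma spectral' (a b d s : ℝ) (hs0 : 0 ≤ s) (hs2 : s^2 = ((a-d)/2)^2 + b^2) :
    ∃ O : Matrix (Fin 2) (Fin 2) ℝ, O * Oᵀ = 1 ∧ Oᵀ * O = 1 ∧
      !![a,b;b,d] = O * !![(a+d)/2 + s, 0; 0, (a+d)/2 - s] * Oᵀ := by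
  rcases eq_or_lt_of_le hs0 with hse | hspos
  · -- s = 0, so a = d and b = 0
    have hz : ((a-d)/2)^2 + b^2 = 0 := by rw [← hs2, ← hse]; ring
    have hpz : (a-d)/2 = 0 := by nlinarith
    have hbz : b = 0 := by nlinarith
    refine ⟨1, by simp, by simp, ?_⟩
    rw [Matrix.transpose_one, Matrix.one_mul, Matrix.mul_one]
    ext i j
    fin_cases i <;> fin_cases j <;> simp [hbz, ← hse] <;> linarith
  · rcases eq_or_ne (s + (a-d)/2) 0 with hsp | hsp
    · -- (a-d)/2 = -s, b = 0
      have hbz : b = 0 := by nlinarith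
      refine ⟨!![0,1;1,0], ?_, ?_, ?_⟩
      · rw [tr2]; ext i j; fin_cases i <;> fin_cases j <;>
          simp [Matrix.mul_apply, Matrix.vecMul, dotProduct, Fin.sum_univ_two,
            Matrix.one_apply]
      · rw [tr2]; ext i j; fin_cases i <;> fin_cases j <;>
          simp [Matrix.mul_apply, Matrix.vecMul, dotProduct, Fin.sum_univ_two,
            Matrix.one_apply]
      · rw [tr2]; ext i j; fin_cases i <;> fin_cases j <;>
          simp [Matrix.mul_apply, Matrix.vecMul, dotProduct, Fin.sum_univ_two,
            hbz] <;> linarith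
    · have hsppos : 0 < s + (a-d)/2 := by
        rcases lt_or_gt_of_ne hsp with h | h
        · exfalso; nlinarith
        · exact h
      obtain ⟨c, hc0, hc2⟩ : ∃ c : ℝ, 0 < c ∧ c^2 = (s + (a-d)/2)/(2*s) :=
        ⟨Real.sqrt _, Real.sqrt_pos.mpr (by positivity), Real.sq_sqrt (by positivity)⟩
      obtain ⟨σ, h3⟩ : ∃ σ : ℝ, 2*s*c*σ = b :=
        ⟨b/(2*s*c), by field_simp⟩
      have h4c : 4*s^2*c^2 = 2*s*(s + (a-d)/2) := by
        rw [hc2]; field_simp; ring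
      have hb2 : b^2 = (s - (a-d)/2)*(s + (a-d)/2) := by nlinarith
      have h5 : (2*s*σ^2) * (s + (a-d)/2) = (s - (a-d)/2) * (s + (a-d)/2) := by
        have h4 : 4*s^2*c^2*σ^2 = b^2 := by rw [← h3]; ring
        nlinarith [h4, h4c, hb2]
      have hσ2 : σ^2 = (s - (a-d)/2)/(2*s) := by
        have h6 : 2*s*σ^2 = s - (a-d)/2 := mul_right_cancel₀ hsp h5
        rw [eq_div_iff (by positivity : (2*s : ℝ) ≠ 0)]
        linarith
      have h1 : c^2 + σ^2 = 1 := by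
        rw [hc2, hσ2]; field_simp; ring
      have h2 : s*(c^2 - σ^2) = (a-d)/2 := by
        rw [hc2, hσ2]; field_simp; ring
      exact ⟨!![c,-σ;σ,c], rot_orth1 c σ h1, rot_orth2 c σ h1, rot_spec a b d s c σ h1 h2 h3⟩

lemma spectral (A : Matrix (Fin 2) (Fin 2) ℝ) (hA : A.IsSymm) :
    ∃ O : Matrix (Fin 2) (Fin 2) ℝ, O * Oᵀ = 1 ∧ Oᵀ * O = 1 ∧
      A = O * !![A.trace/2 + tnorm (dev A), 0; 0, A.trace/2 - tnorm (dev A)] * Oᵀ := by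
  have h10 : A 1 0 = A 0 1 := hA.apply 0 1
  have hAeq : A = !![A 0 0, A 0 1; A 0 1, A 1 1] :=
    (Matrix.eta_fin_two A).trans (by rw [h10])
  have ht : A.trace = A 0 0 + A 1 1 := by
    rw [Matrix.trace_fin_two]
  have hs : tnorm (dev A) = Real.sqrt (((A 0 0 - A 1 1)/2)^2 + (A 0 1)^2) := by
    conv_lhs => rw [hAeq]
    rw [tnorm_dev_fin]
  obtain ⟨O, h1, h2, hO⟩ := spectral' (A 0 0) (A 0 1) (A 1 1) (tnorm (dev A))
    (by rw [hs]; exact Real.sqrt_nonneg _)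
    (by rw [hs]; exact Real.sq_sqrt (by positivity))
  refine ⟨O, h1, h2, ?_⟩
  rw [ht]
  calc A = !![A 0 0, A 0 1; A 0 1, A 1 1] := hAeq
    _ = O * !![(A 0 0 + A 1 1)/2 + tnorm (dev A), 0; 0,
          (A 0 0 + A 1 1)/2 - tnorm (dev A)] * Oᵀ := hO
    _ = O * !![(A 0 0 + A 1 1)/2 + tnorm (dev A), 0; 0,
          (A 0 0 + A 1 1)/2 - tnorm (dev A)] * Oᵀ := rfl

lemma J_conj (M : Matrix (Fin 2) (Fin 2) ℝ) :
    !![(1:ℝ),0;0,-1] * M * !![(1:ℝ),0;0,-1]ᵀ = !![M 0 0, -(M 0 1); -(M 1 0), M 1 1] := by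
  rw [tr2]
  ext i j; fin_cases i <;> fin_cases j <;>
    simp [Matrix.mul_apply, Matrix.vecMul, dotProduct, Fin.sum_univ_two]

lemma S_conj (M : Matrix (Fin 2) (Fin 2) ℝ) :
    !![(0:ℝ),1;1,0] * M * !![(0:ℝ),1;1,0]ᵀ = !![M 1 1, M 1 0; M 0 1, M 0 0] := by
  rw [tr2]
  ext i j; fin_cases i <;> fin_cases j <;>
    simp [Matrix.mul_apply, Matrix.vecMul, dotProduct, Fin.sum_univ_two]

lemma J_orth : (!![(1:ℝ),0;0,-1] * !![(1:ℝ),0;0,-1]ᵀ = 1) ∧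
    (!![(1:ℝ),0;0,-1]ᵀ * !![(1:ℝ),0;0,-1] = 1) := by
  constructor <;> (rw [tr2]; ext i j; fin_cases i <;> fin_cases j <;>
    simp [Matrix.mul_apply, Matrix.vecMul, dotProduct, Fin.sum_univ_two,
      Matrix.one_apply])

lemma S_orth : (!![(0:ℝ),1;1,0] * !![(0:ℝ),1;1,0]ᵀ = 1) ∧
    (!![(0:ℝ),1;1,0]ᵀ * !![(0:ℝ),1;1,0] = 1) := by
  constructor <;> (rw [tr2]; ext i j; fin_cases i <;> fin_cases j <;>
    simp [Matrix.mul_apply, Matrix.vecMul, dotProduct, Fin.sum_univ_two,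
      Matrix.one_apply])

/-- Representation theorem for isotropic functions in two dimensions: a function `𝒞`
from real symmetric 2×2 matrices to real symmetric 2×2 matrices is isotropic if and
only if `𝒞(A) = ψ₁(tr A, |dev A|)·I + ψ₂(tr A, |dev A|)·dev A` for two scalar
functions `ψ₁, ψ₂`. -/
theorem isotropic_iff_representation
    (C : Matrix (Fin 2) (Fin 2) ℝ → Matrix (Fin 2) (Fin 2) ℝ)
    (hsym : ∀ A : Matrix (Fin 2) (Fin 2) ℝ, A.IsSymm → (C A).IsSymm) :
    (∀ O : Matrix (Fin 2) (Fin 2) ℝ, O * Oᵀ = 1 → Oᵀ * O = 1 →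
        ∀ A : Matrix (Fin 2) (Fin 2) ℝ, A.IsSymm → C (O * A * Oᵀ) = O * C A * Oᵀ) ↔
      (∃ ψ₁ ψ₂ : ℝ → ℝ → ℝ, ∀ A : Matrix (Fin 2) (Fin 2) ℝ, A.IsSymm →
        C A = ψ₁ A.trace (tnorm (dev A)) • (1 : Matrix (Fin 2) (Fin 2) ℝ) +
              ψ₂ A.trace (tnorm (dev A)) • dev A) := by
  constructor
  · intro hiso
    refine ⟨fun t s => ((C !![t/2+s,0;0,t/2-s]) 0 0 + (C !![t/2+s,0;0,t/2-s]) 1 1)/2,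
      fun t s => if s = 0 then 0 else
        ((C !![t/2+s,0;0,t/2-s]) 0 0 - (C !![t/2+s,0;0,t/2-s]) 1 1)/(2*s), ?_⟩
    have hDsym : ∀ t s : ℝ, (!![t/2+s,0;0,t/2-s] : Matrix (Fin 2) (Fin 2) ℝ).IsSymm := by
      intro t s
      show _ᵀ = _
      rw [tr2]
    have key : ∀ t s : ℝ,
        C !![t/2+s,0;0,t/2-s] =
          (((C !![t/2+s,0;0,t/2-s]) 0 0 + (C !![t/2+s,0;0,t/2-s]) 1 1)/2) •
            (1 : Matrix (Fin 2) (Fin 2) ℝ)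
          + (if s = 0 then 0 else
              ((C !![t/2+s,0;0,t/2-s]) 0 0 - (C !![t/2+s,0;0,t/2-s]) 1 1)/(2*s)) •
            dev !![t/2+s,0;0,t/2-s] := by
      intro t s
      have hMsym : (C !![t/2+s,0;0,t/2-s]) 1 0 = (C !![t/2+s,0;0,t/2-s]) 0 1 :=
        (hsym _ (hDsym t s)).apply 0 1
      have hJfix : !![(1:ℝ),0;0,-1] * !![t/2+s,0;0,t/2-s] * !![(1:ℝ),0;0,-1]ᵀ
          = !![t/2+s,0;0,t/2-s] := by
        rw [J_conj]; norm_num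
      have hJiso := hiso !![(1:ℝ),0;0,-1] J_orth.1 J_orth.2 _ (hDsym t s)
      rw [hJfix, J_conj] at hJiso
      have hM01 : (C !![t/2+s,0;0,t/2-s]) 0 1 = 0 := by
        have := congrFun (congrFun hJiso 0) 1
        simp at this
        linarith
      have hM10 : (C !![t/2+s,0;0,t/2-s]) 1 0 = 0 := by rw [hMsym, hM01]
      have hdev : dev !![t/2+s,0;0,t/2-s] = !![s,0;0,-s] := by
        unfold dev
        ext i j
        fin_cases i <;> fin_cases j <;>
          simp [Matrix.trace_fin_two, Matrix.one_apply] <;> ring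
      rcases eq_or_ne s 0 with hs | hs
      · have hSfix : !![(0:ℝ),1;1,0] * !![t/2+s,0;0,t/2-s] * !![(0:ℝ),1;1,0]ᵀ
            = !![t/2+s,0;0,t/2-s] := by
          rw [S_conj]
          ext i j; fin_cases i <;> fin_cases j <;> simp [hs]
        have hSiso := hiso !![(0:ℝ),1;1,0] S_orth.1 S_orth.2 _ (hDsym t s)
        rw [hSfix, S_conj] at hSiso
        have hMdiag : (C !![t/2+s,0;0,t/2-s]) 0 0 = (C !![t/2+s,0;0,t/2-s]) 1 1 := by
          have := congrFun (congrFun hSiso 0) 0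
          simpa using this
        rw [if_pos hs]
        ext i j
        fin_cases i <;> fin_cases j <;>
          simp [Matrix.one_apply, hM01, hM10] <;> linarith
      · rw [if_neg hs, hdev]
        ext i j
        fin_cases i <;> fin_cases j <;>
          simp [Matrix.one_apply, hM01, hM10] <;> field_simp <;> ring
    intro A hA
    obtain ⟨O, h1, h2, hAeq⟩ := spectral A hA
    have hCA : C A = O * C !![A.trace/2 + tnorm (dev A), 0; 0, A.trace/2 - tnorm (dev A)] * Oᵀ := by
      conv_lhs => rw [hAeq]
      exact hiso O h1 h2 _ (hDsym A.trace (tnorm (dev A)))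
    rw [hCA, key A.trace (tnorm (dev A))]
    rw [Matrix.mul_add, Matrix.add_mul]
    congr 1
    · rw [Matrix.mul_smul, Matrix.smul_mul, Matrix.mul_one, h1]
    · rw [Matrix.mul_smul, Matrix.smul_mul, ← dev_conj h1 h2, ← hAeq]
  · rintro ⟨ψ₁, ψ₂, hrep⟩ O h1 h2 A hA
    have hA' : (O * A * Oᵀ).IsSymm := by
      show (O * A * Oᵀ)ᵀ = O * A * Oᵀ
      rw [Matrix.transpose_mul, Matrix.transpose_mul, Matrix.transpose_transpose, hA.eq,
        Matrix.mul_assoc]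
    rw [hrep _ hA', hrep _ hA, trace_conj h2, dev_conj h1 h2, tnorm_conj h2]
    rw [Matrix.mul_add, Matrix.add_mul]
    congr 1
    · rw [Matrix.mul_smul, Matrix.smul_mul, Matrix.mul_one, h1]
    · rw [Matrix.mul_smul, Matrix.smul_mul]
end
end

section
/- Let 𝒞 be a linear map from the real vector space of symmetric 2×2 matrices to itself. Then 𝒞 is isotropic if and only if there exist real constants ζ and η such that 𝒞(A) = ζ·(tr A)·I + 2η·dev A for every real symmetric 2×2 matrix A. (This characterizes all compressible Newtonian rheologies: ζ is the bulk viscosity and η the shear viscosity.) -/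
open Matrix

noncomputable section

/-- The real vector space of symmetric 2×2 matrices, as a submodule of all 2×2 matrices. -/
def SymMat : Submodule ℝ (Matrix (Fin 2) (Fin 2) ℝ) where
  carrier := {A | A.IsSymm}
  add_mem' := fun ha hb => ha.add hb
  zero_mem' := Matrix.isSymm_zero
  smul_mem' := fun c _ ha => by
    simpa [Matrix.IsSymm, Matrix.transpose_smul] using congrArg (c • ·) ha

/-- Orthogonal conjugation preserves symmetry. -/
theorem conj_mem (O A : Matrix (Fin 2) (Fin 2) ℝ) (hA : A ∈ SymMat) :
    O * A * Oᵀ ∈ SymMat := by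
  have hA' : Aᵀ = A := hA
  show (O * A * Oᵀ)ᵀ = O * A * Oᵀ
  rw [Matrix.transpose_mul, Matrix.transpose_mul, Matrix.transpose_transpose, hA',
    Matrix.mul_assoc]

abbrev M2 := Matrix (Fin 2) (Fin 2) ℝ

lemma eq2 {a b c d a' b' c' d' : ℝ} (h1 : a = a') (h2 : b = b') (h3 : c = c')
    (h4 : d = d') : !![a,b;c,d] = !![a',b';c',d'] := by
  rw [h1,h2,h3,h4]

def eD : M2 := !![1,0;0,-1]
def eS : M2 := !![0,1;1,0]
def O90 : M2 := !![0,-1;1,0]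

lemma symm_one : (1 : M2) ∈ SymMat := Matrix.isSymm_one
lemma symm_eD : eD ∈ SymMat := by
  show eDᵀ = eD
  ext i j; fin_cases i <;> fin_cases j <;> simp [eD]
lemma symm_eS : eS ∈ SymMat := by
  show eSᵀ = eS
  ext i j; fin_cases i <;> fin_cases j <;> simp [eS]

lemma O90_orth : O90 * O90ᵀ = 1 ∧ O90ᵀ * O90 = 1 := by
  constructor <;>
  · rw [O90, tr2, Matrix.mul_fin_two, Matrix.one_fin_two]
    exact eq2 (by ring) (by ring) (by ring) (by ring)

lemma eD_orth : eD * eDᵀ = 1 ∧ eDᵀ * eD = 1 := by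
  constructor <;>
  · rw [eD, tr2, Matrix.mul_fin_two, Matrix.one_fin_two]
    exact eq2 (by ring) (by ring) (by ring) (by ring)

noncomputable def c45 : ℝ := Real.sqrt 2 / 2
noncomputable def R45 : M2 := !![c45,-c45;c45,c45]

lemma c45_sq : c45 * c45 = 1/2 := by
  have : Real.sqrt 2 * Real.sqrt 2 = 2 := Real.mul_self_sqrt (by norm_num)
  simp [c45]; nlinarith [this]

lemma R45_orth : R45 * R45ᵀ = 1 ∧ R45ᵀ * R45 = 1 := by
  have h := c45_sq
  constructor <;>
  · rw [R45, tr2, Matrix.mul_fin_two, Matrix.one_fin_two]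
    exact eq2 (by nlinarith) (by ring) (by ring) (by nlinarith)

lemma conj_O90_one : O90 * (1:M2) * O90ᵀ = 1 := by
  rw [Matrix.mul_one, O90_orth.1]

lemma neg2 (a b c d : ℝ) : -(!![a,b;c,d]) = !![-a,-b;-c,-d] := by
  ext i j; fin_cases i <;> fin_cases j <;> rfl

lemma conj_O90_eD : O90 * eD * O90ᵀ = -eD := by
  rw [O90, eD, tr2, Matrix.mul_fin_two, Matrix.mul_fin_two, neg2]
  exact eq2 (by ring) (by ring) (by ring) (by ring)

lemma conj_eD_eD : eD * eD * eDᵀ = eD := by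
  rw [eD, tr2, Matrix.mul_fin_two, Matrix.mul_fin_two]
  exact eq2 (by ring) (by ring) (by ring) (by ring)

lemma conj_eD_eS : eD * eS * eDᵀ = -eS := by
  rw [eD, eS, tr2, Matrix.mul_fin_two, Matrix.mul_fin_two, neg2]
  exact eq2 (by ring) (by ring) (by ring) (by ring)

lemma conj_R45_eD : R45 * eD * R45ᵀ = eS := by
  have h := c45_sq
  rw [R45, eD, eS, tr2, Matrix.mul_fin_two, Matrix.mul_fin_two]
  exact eq2 (by nlinarith) (by nlinarith) (by nlinarith) (by nlinarith)


lemma smul2 (r a b c d : ℝ) : r • (!![a,b;c,d] : M2) = !![r*a,r*b;r*c,r*d] := by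
  ext i j; fin_cases i <;> fin_cases j <;> simp [Matrix.smul_apply]

lemma add2 (a b c d a' b' c' d' : ℝ) :
    (!![a,b;c,d] : M2) + !![a',b';c',d'] = !![a+a',b+b';c+c',d+d'] := by
  ext i j; fin_cases i <;> fin_cases j <;> simp [Matrix.add_apply]

lemma conj_O90_apply (X : M2) :
    O90 * X * O90ᵀ = !![X 1 1, -(X 1 0); -(X 0 1), X 0 0] := by
  rw [O90, tr2, Matrix.eta_fin_two X, Matrix.mul_fin_two, Matrix.mul_fin_two]
  exact eq2 (by simp) (by simp) (by simp) (by simp)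

lemma conj_eD_apply (X : M2) :
    eD * X * eDᵀ = !![X 0 0, -(X 0 1); -(X 1 0), X 1 1] := by
  rw [eD, tr2, Matrix.eta_fin_two X, Matrix.mul_fin_two, Matrix.mul_fin_two]
  exact eq2 (by simp) (by simp) (by simp) (by simp)


/-- A linear map `𝒞` on the space of real symmetric 2×2 matrices is isotropic if and
only if `𝒞(A) = ζ·(tr A)·I + 2η·dev A` for real constants `ζ` (bulk viscosity) and
`η` (shear viscosity): the characterization of compressible Newtonian rheologies. -/
theorem linear_isotropic_iff_newtonian (C : SymMat →ₗ[ℝ] SymMat) :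
    (∀ O : Matrix (Fin 2) (Fin 2) ℝ, O * Oᵀ = 1 → Oᵀ * O = 1 →
        ∀ A : SymMat,
          (C ⟨O * (A : Matrix (Fin 2) (Fin 2) ℝ) * Oᵀ, conj_mem O A A.2⟩ :
              Matrix (Fin 2) (Fin 2) ℝ) =
            O * (C A : Matrix (Fin 2) (Fin 2) ℝ) * Oᵀ) ↔
      (∃ ζ η : ℝ, ∀ A : SymMat,
        (C A : Matrix (Fin 2) (Fin 2) ℝ) =
          (ζ * (A : Matrix (Fin 2) (Fin 2) ℝ).trace) • (1 : Matrix (Fin 2) (Fin 2) ℝ) +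
            (2 * η) • dev (A : Matrix (Fin 2) (Fin 2) ℝ)) := by
  constructor
  · intro h
    set vI : SymMat := ⟨1, symm_one⟩ with hvI
    set vD : SymMat := ⟨eD, symm_eD⟩ with hvD
    set vS : SymMat := ⟨eS, symm_eS⟩ with hvS
    set M : M2 := (C vI : M2) with hMdef
    set N : M2 := (C vD : M2) with hNdef
    set K : M2 := (C vS : M2) with hKdef
    -- symmetry of values
    have hMsym : M 1 0 = M 0 1 := by
      have := (C vI).2
      simpa using congrFun (congrFun this 0) 1
    have hNsym : N 1 0 = N 0 1 := by
      have := (C vD).2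
      simpa using congrFun (congrFun this 0) 1
    have hKsym : K 1 0 = K 0 1 := by
      have := (C vS).2
      simpa using congrFun (congrFun this 0) 1
    -- C vI = M00 • 1
    have hI : M = O90 * M * O90ᵀ := by
      have := h O90 O90_orth.1 O90_orth.2 vI
      rw [show (⟨O90 * (vI : M2) * O90ᵀ, conj_mem O90 vI vI.2⟩ : SymMat) = vI from
        Subtype.ext conj_O90_one] at this
      exact this
    rw [conj_O90_apply] at hI
    have hM01 : M 0 1 = 0 := by
      have e := congrFun (congrFun hI 0) 1
      simp at e
      rw [hMsym] at e
      linarith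
    have hM11 : M 1 1 = M 0 0 := by
      have e := congrFun (congrFun hI 0) 0
      simp at e
      linarith
    have hMval : M = (M 0 0) • (1 : M2) := by
      rw [Matrix.one_fin_two, smul2]
      nth_rewrite 1 [Matrix.eta_fin_two M]
      exact eq2 (by ring) (by rw [hM01]; ring) (by rw [hMsym, hM01]; ring)
        (by rw [hM11]; ring)
    -- C vD = N00 • eD
    have hD1 : -N = O90 * N * O90ᵀ := by
      have := h O90 O90_orth.1 O90_orth.2 vD
      rw [show (⟨O90 * (vD : M2) * O90ᵀ, conj_mem O90 vD vD.2⟩ : SymMat) = -vD from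
        Subtype.ext (by simpa using conj_O90_eD), map_neg] at this
      simpa [← hNdef] using this
    rw [conj_O90_apply] at hD1
    have hN11 : N 1 1 = -(N 0 0) := by
      have e := congrFun (congrFun hD1 0) 0
      simp at e
      linarith
    have hD2 : N = eD * N * eDᵀ := by
      have := h eD eD_orth.1 eD_orth.2 vD
      rw [show (⟨eD * (vD : M2) * eDᵀ, conj_mem eD vD vD.2⟩ : SymMat) = vD from
        Subtype.ext conj_eD_eD] at this
      exact this
    rw [conj_eD_apply] at hD2
    have hN01 : N 0 1 = 0 := by
      have e := congrFun (congrFun hD2 0) 1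
      simp at e
      linarith
    have hNval : N = (N 0 0) • eD := by
      rw [eD, smul2]
      nth_rewrite 1 [Matrix.eta_fin_two N]
      exact eq2 (by ring) (by rw [hN01]; ring) (by rw [hNsym, hN01]; ring)
        (by rw [hN11]; ring)
    -- C vS = N00 • eS
    have hKval : K = (N 0 0) • eS := by
      have := h R45 R45_orth.1 R45_orth.2 vD
      rw [show (⟨R45 * (vD : M2) * R45ᵀ, conj_mem R45 vD vD.2⟩ : SymMat) = vS from
        Subtype.ext conj_R45_eD] at this
      rw [← hKdef, ← hNdef, hNval, Matrix.mul_smul, Matrix.smul_mul, conj_R45_eD] at this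
      exact this
    -- conclusion
    refine ⟨M 0 0 / 2, N 0 0 / 2, fun A => ?_⟩
    have hAsym : (A : M2) 1 0 = (A : M2) 0 1 := by
      simpa using congrFun (congrFun A.2 0) 1
    set a : ℝ := ((A : M2) 0 0 + (A : M2) 1 1) / 2 with ha
    set b : ℝ := ((A : M2) 0 0 - (A : M2) 1 1) / 2 with hb
    set c : ℝ := (A : M2) 0 1 with hc
    have hdecomp : (A : M2) = a • (1 : M2) + b • eD + c • eS := by
      rw [Matrix.one_fin_two, eD, eS, smul2, smul2, smul2, add2, add2]
      nth_rewrite 1 [Matrix.eta_fin_two (A : M2)]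
      exact eq2 (by rw [ha, hb]; ring) (by rw [hc]; ring) (by rw [hAsym, hc]; ring)
        (by rw [ha, hb]; ring)
    have hCA : (C A : M2) = a • M + b • N + c • K := by
      have hA : A = a • vI + b • vD + c • vS := by
        apply Subtype.ext
        simpa [hvI, hvD, hvS] using hdecomp
      rw [hA, map_add, map_add, C.map_smul, C.map_smul, C.map_smul]
      push_cast
      rw [← hMdef, ← hNdef, ← hKdef]
    have htr : (A : M2).trace = 2 * a := by
      rw [Matrix.trace_fin_two, ha]; ring
    rw [hCA, hMval, hNval, hKval, dev, htr, hdecomp]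
    ext i j
    fin_cases i <;> fin_cases j <;>
      simp [eD, eS, Matrix.add_apply, Matrix.sub_apply, Matrix.smul_apply,
        Matrix.one_apply] <;> ring
  · rintro ⟨ζ, η, hC⟩ O hO hO' A
    rw [hC, hC]
    have htr : (O * (A : Matrix (Fin 2) (Fin 2) ℝ) * Oᵀ).trace
        = (A : Matrix (Fin 2) (Fin 2) ℝ).trace := by
      rw [Matrix.trace_mul_cycle, hO', one_mul]
    rw [htr]
    simp only [dev, htr]
    simp only [Matrix.mul_add, Matrix.add_mul, Matrix.mul_smul, Matrix.smul_mul,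
      Matrix.mul_one, Matrix.mul_sub, Matrix.sub_mul, hO]
end
end

section
/- Let j : ℝ × ℝ → ℝ be differentiable and let ψ₁, ψ₂ : ℝ × ℝ → ℝ satisfy ∂j/∂t (t,s) = ψ₁(t,s) and ∂j/∂s (t,s) = ψ₂(t,s)·s for all (t,s) with s > 0. Define F on the real vector space of symmetric 2×2 matrices by F(A) := j(tr A, |dev A|). Then at every real symmetric 2×2 matrix A with dev A ≠ 0, F is Fréchet differentiable and its derivative in the direction of a symmetric 2×2 matrix B is F′(A)(B) = ψ₁(tr A, |dev A|)·tr B + ψ₂(tr A, |dev A|)·(1/2)·tr((dev A)·(dev B)). -/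
open Matrix

noncomputable section

attribute [local instance] Matrix.normedAddCommGroup Matrix.normedSpace

/-!
`F` is `j` composed with the invariants `ι(X) = (tr X, |dev X|)`. The trace is linear, and
`|S| = √q(S)` with `q(S) = ½ tr(S²)` a quadratic form whose derivative at `S` is `B ↦ tr(S B)`;
for symmetric `S ≠ 0` one has `q(S) > 0`, so `√` is differentiable there and `|·|` has derivative
`B ↦ tr(S B) / (2|S|)` at `S = dev A`. The chain rule then gives
`F′(A)(B) = ∂ₜj · tr B + ∂ₛj · tr(dev A · dev B) / (2|dev A|)`, and the factor `s = |dev A|` in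
`∂ₛj = ψ₂ · s` cancels the denominator.
-/

namespace Matrix

variable {n : Type*} [Fintype n]

theorem IsSymm.trace_mul_self_pos {S : Matrix n n ℝ} (hS : S.IsSymm) (h : S ≠ 0) :
    0 < (S * S).trace := by
  have hST : Sᴴ * S = S * S := by rw [conjTranspose_eq_transpose_of_trivial, hS.eq]
  refine lt_of_le_of_ne ?_ fun h0 => h ?_
  · rw [← hST]
    exact (posSemidef_conjTranspose_mul_self S).trace_nonneg
  · rw [← trace_conjTranspose_mul_self_eq_zero_iff, hST, h0]

def traceMulCLM : Matrix n n ℝ →L[ℝ] Matrix n n ℝ →L[ℝ] ℝ :=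
  LinearMap.toContinuousLinearMap
    ((LinearMap.toContinuousLinearMap : (Matrix n n ℝ →ₗ[ℝ] ℝ) ≃ₗ[ℝ] _).toLinearMap ∘ₗ
      (LinearMap.mul ℝ (Matrix n n ℝ)).compr₂ (traceLinearMap n ℝ ℝ))

@[simp]
theorem traceMulCLM_apply (U V : Matrix n n ℝ) : traceMulCLM U V = (U * V).trace := rfl

theorem IsSymm.dev {A : Matrix (Fin 2) (Fin 2) ℝ} (hA : A.IsSymm) : (dev A).IsSymm := by
  simp only [_root_.dev, IsSymm, transpose_sub, transpose_smul, transpose_one, hA.eq]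

theorem IsSymm.tnorm_pos {S : Matrix (Fin 2) (Fin 2) ℝ} (hS : S.IsSymm) (h : S ≠ 0) :
    0 < tnorm S :=
  Real.sqrt_pos.mpr (by have := hS.trace_mul_self_pos h; positivity)

end Matrix

def devCLM : Matrix (Fin 2) (Fin 2) ℝ →L[ℝ] Matrix (Fin 2) (Fin 2) ℝ :=
  LinearMap.toContinuousLinearMap
    { toFun := dev
      map_add' := fun A B => by
        simp only [dev, trace_add, mul_add, add_smul]
        abel
      map_smul' := fun c A => by
        simp only [dev, trace_smul, RingHom.id_apply, smul_sub, smul_smul, smul_eq_mul]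
        ring_nf }

theorem hasFDerivAt_tnorm {S : Matrix (Fin 2) (Fin 2) ℝ} (hS : 0 < (S * S).trace) :
    HasFDerivAt tnorm ((2 * tnorm S)⁻¹ • traceMulCLM S) S := by
  have hsq : HasFDerivAt (fun X => (1 / 2 : ℝ) * traceMulCLM X X)
      ((1 / 2 : ℝ) • (traceMulCLM.precompR _ S (.id ℝ _) + traceMulCLM.precompL _ (.id ℝ _) S))
      S :=
    (traceMulCLM.hasFDerivAt_of_bilinear (hasFDerivAt_id S) (hasFDerivAt_id S)).const_mul _
  refine (hsq.sqrt (by simp only [traceMulCLM_apply]; positivity)).congr_fderiv ?_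
  ext B
  change 1 / (2 * tnorm S) * (1 / 2 * ((S * B).trace + (B * S).trace)) =
    (2 * tnorm S)⁻¹ * (S * B).trace
  rw [trace_mul_comm B S]
  ring

theorem ContinuousLinearMap.apply_prod_eq {R M : Type*} [Semiring R] [TopologicalSpace R]
    [AddCommMonoid M] [TopologicalSpace M] [Module R M] (φ : R × R →L[R] M) (u v : R) :
    φ (u, v) = u • φ (1, 0) + v • φ (0, 1) := by
  rw [← map_smul, ← map_smul, ← map_add]
  simp

/-- The invariants `ι_A = (tr A, |dev A|)` of a matrix. -/
def invariants (A : Matrix (Fin 2) (Fin 2) ℝ) : ℝ × ℝ := (A.trace, tnorm (dev A))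

theorem hasFDerivAt_invariants {A : Matrix (Fin 2) (Fin 2) ℝ}
    (hA : 0 < (dev A * dev A).trace) :
    HasFDerivAt invariants
      ((traceLinearMap (Fin 2) ℝ ℝ).toContinuousLinearMap.prod
        (((2 * tnorm (dev A))⁻¹ • traceMulCLM (dev A)).comp devCLM)) A :=
  (traceLinearMap (Fin 2) ℝ ℝ).toContinuousLinearMap.hasFDerivAt.prodMk
    ((hasFDerivAt_tnorm hA).comp A devCLM.hasFDerivAt)

/-- If `j` is a differentiable potential of dissipation whose partial derivatives on
`{s > 0}` are `∂j/∂t = ψ₁` and `∂j/∂s = ψ₂(t,s)·s`, then `F(A) := j(tr A, |dev A|)` is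
Fréchet differentiable on the space of symmetric 2×2 matrices at every `A` with
`dev A ≠ 0`, with derivative
`F′(A)(B) = ψ₁(tr A, |dev A|)·tr B + ψ₂(tr A, |dev A|)·(1/2)·tr((dev A)·(dev B))`. -/
theorem potential_frechet_derivative (j : ℝ × ℝ → ℝ) (hj : Differentiable ℝ j)
    (ψ₁ ψ₂ : ℝ → ℝ → ℝ)
    (hj₁ : ∀ t s : ℝ, 0 < s → fderiv ℝ j (t, s) (1, 0) = ψ₁ t s)
    (hj₂ : ∀ t s : ℝ, 0 < s → fderiv ℝ j (t, s) (0, 1) = ψ₂ t s * s)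
    (A : SymMat) (hA : dev (A : Matrix (Fin 2) (Fin 2) ℝ) ≠ 0) :
    ∃ L : SymMat →L[ℝ] ℝ,
      HasFDerivAt
        (fun X : SymMat =>
          j ((X : Matrix (Fin 2) (Fin 2) ℝ).trace, tnorm (dev (X : Matrix (Fin 2) (Fin 2) ℝ))))
        L A ∧
      ∀ B : SymMat,
        L B =
          ψ₁ (A : Matrix (Fin 2) (Fin 2) ℝ).trace (tnorm (dev (A : Matrix (Fin 2) (Fin 2) ℝ))) *
              (B : Matrix (Fin 2) (Fin 2) ℝ).trace +
            ψ₂ (A : Matrix (Fin 2) (Fin 2) ℝ).trace (tnorm (dev (A : Matrix (Fin 2) (Fin 2) ℝ))) *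
              ((1 / 2) *
                (dev (A : Matrix (Fin 2) (Fin 2) ℝ) * dev (B : Matrix (Fin 2) (Fin 2) ℝ)).trace) := by
  have hdevA : (dev (A : Matrix (Fin 2) (Fin 2) ℝ)).IsSymm := A.2.dev
  have hs := hdevA.tnorm_pos hA
  have hι := (hasFDerivAt_invariants (hdevA.trace_mul_self_pos hA)).comp A
    SymMat.subtypeL.hasFDerivAt
  refine ⟨_, (hj _).hasFDerivAt.comp A hι, fun B => ?_⟩
  change fderiv ℝ j (invariants A) ((B : Matrix (Fin 2) (Fin 2) ℝ).trace,
    (2 * tnorm (dev A))⁻¹ * (dev (A : Matrix (Fin 2) (Fin 2) ℝ) * dev B).trace) = _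
  rw [ContinuousLinearMap.apply_prod_eq, invariants, hj₁ _ _ hs, hj₂ _ _ hs, smul_eq_mul,
    smul_eq_mul]
  field_simp
end
end
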